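/- arXiv:2307.02513 — 7 statements merged into one kernel-verified Lean document; each statement's English description precedes it below -/
import Mathlib

section
/- Every integer solution of the equation x⁴ + x*y² + y³ = 0 is either (0, 0) or of the form (x, y) = (-w²*(1+w), -w³*(1+w)) for some integer w. Conversely, every pair of this form is a solution. -/
/-!
The origin is a singular point of the curve, and the line `y = t * x` through it meets the curve
again exactly where `x = -t ^ 2 * (1 + t)`. For an integer point with `x ≠ 0`, the slope
`t = y / x` is therefore a rational root of the monic polynomial `T ^ 3 + T ^ 2 + x`, so it is an
integer `w` because `ℤ` is integrally closed, and then `x = -w ^ 2 * (1 + w)`, `y = w * x`.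
-/

open Polynomial

theorem IsIntegrallyClosed.exists_algebraMap_eq_of_sq_mul_one_add_eq {R K : Type*} [CommRing R]
    [CommRing K] [Algebra R K] [IsFractionRing R K] [IsIntegrallyClosed R] {t : K} {n : R}
    (h : t ^ 2 * (1 + t) = algebraMap R K n) : ∃ w : R, algebraMap R K w = t := by
  refine IsIntegrallyClosed.algebraMap_eq_of_integral ⟨X ^ 3 + X ^ 2 - C n, by monicity!, ?_⟩
  simp only [eval₂_sub, eval₂_add, eval₂_X_pow, eval₂_C]
  linear_combination h

theorem div_sq_mul_one_add_div_eq_neg {K : Type*} [Field K] {x y : K} (hx : x ≠ 0)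
    (h : x ^ 4 + x * y ^ 2 + y ^ 3 = 0) : (y / x) ^ 2 * (1 + y / x) = -x := by
  field_simp
  linear_combination h

theorem stmt_7 (x y : ℤ) :
    x ^ 4 + x * y ^ 2 + y ^ 3 = 0 ↔
      (x = 0 ∧ y = 0) ∨
      ∃ w : ℤ, x = -w ^ 2 * (1 + w) ∧ y = -w ^ 3 * (1 + w) := by
  constructor
  · intro h
    rcases eq_or_ne x 0 with rfl | hx
    · exact .inl ⟨rfl, pow_eq_zero_iff three_ne_zero |>.mp (by linear_combination h)⟩
    have hxq : (x : ℚ) ≠ 0 := by exact_mod_cast hx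
    have hslope : (y / x : ℚ) ^ 2 * (1 + y / x) = -x :=
      div_sq_mul_one_add_div_eq_neg hxq (by exact_mod_cast h)
    obtain ⟨w, hw⟩ := IsIntegrallyClosed.exists_algebraMap_eq_of_sq_mul_one_add_eq (R := ℤ)
      (n := -x) (by rw [hslope, algebraMap_int_eq, eq_intCast, Int.cast_neg])
    rw [algebraMap_int_eq, eq_intCast] at hw
    rw [← hw] at hslope
    have hxw : x = -w ^ 2 * (1 + w) := by
      have : w ^ 2 * (1 + w) = -x := by exact_mod_cast hslope
      linear_combination this
    have hyw : y = w * x := by exact_mod_cast (div_eq_iff hxq).mp hw.symm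
    exact .inr ⟨w, hxw, by rw [hyw, hxw]; ring⟩
  · rintro (⟨rfl, rfl⟩ | ⟨w, rfl, rfl⟩) <;> ring
end

section
/- Every integer solution of the equation x⁴ + x²*y + y³ = 0 is either (0, 0) or of the form (x, y) = (-w - w³, -w²*(1 + w²)) for some integer w. Conversely, every pair of this form is a solution. -/
/-!
The curve `x⁴ + x²y + y³ = 0` is rational, parametrised by the slope `w = y / x`: dividing the
equation by `x³` gives `w³ + w + x = 0`. For an integer solution with `x ≠ 0`, the slope is
therefore a rational root of a monic integer cubic, hence an integer by the integral root theorem,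
and then `x = -w - w³` and `y = w x`.
-/

open Polynomial

lemma Rat.exists_intCast_eq_of_cube_add_self_add_intCast_eq_zero {q : ℚ} {c : ℤ}
    (h : q ^ 3 + q + c = 0) : ∃ w : ℤ, q = w := by
  have hmonic : (X ^ 3 + X + C c : ℤ[X]).Monic := by monicity!
  obtain ⟨w, hw, -⟩ := exists_integer_of_is_root_of_monic (K := ℚ) hmonic (r := q)
    (by simpa using h)
  exact ⟨w, by simpa using hw⟩

lemma div_cube_add_div_add_eq_zero {K : Type*} [Field K] {x y : K} (hx : x ≠ 0)
    (h : x ^ 4 + x ^ 2 * y + y ^ 3 = 0) : (y / x) ^ 3 + y / x + x = 0 := by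
  field_simp
  linear_combination h

lemma Int.exists_eq_mul_of_quartic_eq_zero {x y : ℤ} (hx : x ≠ 0)
    (h : x ^ 4 + x ^ 2 * y + y ^ 3 = 0) : ∃ w : ℤ, y = w * x := by
  have hxℚ : (x : ℚ) ≠ 0 := by exact_mod_cast hx
  have hℚ : (x : ℚ) ^ 4 + (x : ℚ) ^ 2 * y + (y : ℚ) ^ 3 = 0 := by exact_mod_cast h
  obtain ⟨w, hw⟩ := Rat.exists_intCast_eq_of_cube_add_self_add_intCast_eq_zero
    (div_cube_add_div_add_eq_zero hxℚ hℚ)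
  refine ⟨w, ?_⟩
  rw [div_eq_iff hxℚ] at hw
  exact_mod_cast hw

lemma eq_neg_sub_cube_of_eq_mul {R : Type*} [CommRing R] [IsDomain R] {x y w : R} (hx : x ≠ 0)
    (hy : y = w * x) (h : x ^ 4 + x ^ 2 * y + y ^ 3 = 0) : x = -w - w ^ 3 := by
  have hfactor : x ^ 3 * (x + w + w ^ 3) = 0 := by
    linear_combination h - (x ^ 2 + y ^ 2 + y * w * x + w ^ 2 * x ^ 2) * hy
  linear_combination (mul_eq_zero.mp hfactor).resolve_left (pow_ne_zero 3 hx)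

theorem stmt_8 (x y : ℤ) :
    x ^ 4 + x ^ 2 * y + y ^ 3 = 0 ↔
      (x = 0 ∧ y = 0) ∨
      ∃ w : ℤ, x = -w - w ^ 3 ∧ y = -w ^ 2 * (1 + w ^ 2) := by
  constructor
  · intro h
    by_cases hx : x = 0
    · subst hx
      exact Or.inl ⟨rfl, pow_eq_zero_iff three_ne_zero |>.mp (by linarith)⟩
    · obtain ⟨w, hy⟩ := Int.exists_eq_mul_of_quartic_eq_zero hx h
      have hxw := eq_neg_sub_cube_of_eq_mul hx hy h
      refine Or.inr ⟨w, hxw, ?_⟩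
      rw [hy, hxw]
      ring
  · rintro (⟨rfl, rfl⟩ | ⟨w, rfl, rfl⟩) <;> ring
end

section
/- The equation x⁴ + x*y + y³ = 0 has no integer solutions other than (x, y) = (0, 0). -/
theorem stmt_9 (x y : ℤ) (h : x ^ 4 + x * y + y ^ 3 = 0) : x = 0 ∧ y = 0 := by
  rcases eq_or_ne x 0 with hx | hx
  · refine ⟨hx, ?_⟩
    subst hx
    have : y ^ 3 = 0 := by linarith
    exact pow_eq_zero_iff (by norm_num) |>.mp this
  rcases eq_or_ne y 0 with hy | hy
  · subst hy
    exact absurd (pow_eq_zero_iff (n := 4) (by norm_num) |>.mp (by linarith)) hx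
  exfalso
  -- key identity: (2x³+y)² = y²(1-4x²y)
  have hm : (2*x^3 + y)^2 = y^2 * (1 - 4*x^2*y) := by linear_combination 4*x^2*h
  have hdvd : y ∣ 2*x^3 + y := by
    rw [← Int.pow_dvd_pow_iff (two_ne_zero)]
    exact ⟨1 - 4*x^2*y, hm⟩
  obtain ⟨k, hk⟩ := hdvd
  have hk2 : k^2 = 1 - 4*x^2*y := by
    have h2 : y^2 * k^2 = y^2 * (1 - 4*x^2*y) := by rw [← hm, hk]; ring
    exact mul_left_cancel₀ (pow_ne_zero 2 hy) h2
  have hodd : Odd k := by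
    rcases Int.even_or_odd k with ⟨t, rfl⟩ | ho
    · exfalso
      have h4 : 4*(t^2+x^2*y) = 1 := by linear_combination hk2
      omega
    · exact ho
  obtain ⟨s, rfl⟩ := hodd
  -- x³ = s y  and  s(s+1) = -x²y
  have hxs : x^3 = s * y := by
    have : 2 * x^3 = 2 * (s * y) := by linear_combination hk
    exact mul_left_cancel₀ two_ne_zero this
  have hs1 : s * (s+1) = -(x^2*y) := by
    have : 4 * (s * (s+1)) = 4 * (-(x^2*y)) := by linear_combination hk2
    exact mul_left_cancel₀ four_ne_zero this
  have hs5 : s^2 * (s+1) = (-x)^5 := by linear_combination s*hs1 + x^2*hxs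
  have hs0 : s ≠ 0 := by
    rintro rfl
    exact hx (pow_eq_zero_iff (n := 3) (by norm_num) |>.mp (by rw [hxs]; ring))
  have hcop : IsCoprime (s^2) (s+1) :=
    IsCoprime.pow_left ⟨-1, 1, by ring⟩
  obtain ⟨w, hw⟩ := Int.eq_pow_of_mul_eq_pow_odd_left hcop (⟨2, by norm_num⟩ : Odd 5) hs5
  obtain ⟨f, hf⟩ := Int.eq_pow_of_mul_eq_pow_odd_right hcop (⟨2, by norm_num⟩ : Odd 5) hs5
  have hw0 : w ≠ 0 := by
    rintro rfl
    exact hs0 (pow_eq_zero_iff (n := 2) (by norm_num) |>.mp (by rw [hw]; ring))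
  have hws : w^2 ∣ s := by
    rw [← Int.pow_dvd_pow_iff (two_ne_zero)]
    exact ⟨w, by rw [hw]; ring⟩
  obtain ⟨r, hr⟩ := hws
  have hrw : r^2 = w := by
    have h4 : w^4 * r^2 = w^4 * w := by
      have := hw
      rw [hr] at this
      linear_combination this
    exact mul_left_cancel₀ (pow_ne_zero 4 hw0) h4
  have hsr : s = r^5 := by rw [hr, ← hrw]; ring
  have hfr : f^5 = r^5 + 1 := by rw [← hf, hsr]
  -- f⁵ = r⁵ + 1 forces r ∈ {-1, 0}
  have hlt : r < f :=
    (Odd.strictMono_pow (R := ℤ) (⟨2, by norm_num⟩ : Odd 5)).lt_iff_lt.mp (by omega)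
  have hge : (r+1)^5 ≤ f^5 := by
    have h1 : r + 1 ≤ f := by omega
    exact (Odd.strictMono_pow (R := ℤ) (⟨2, by norm_num⟩ : Odd 5)).monotone h1
  have hq : 0 < r^2 + r + 1 := by nlinarith [sq_nonneg (2*r+1)]
  have key : r * (r+1) ≤ 0 := by nlinarith [hq, hge, hfr]
  have hb1 : -1 ≤ r := by nlinarith [key]
  have hb2 : r ≤ 0 := by nlinarith [key]
  interval_cases r
  · apply hx
    have h5 : (-x)^5 = 0 := by rw [← hs5, hsr]; ring
    simpa using pow_eq_zero_iff (n := 5) (by norm_num) |>.mp h5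
  · exact hs0 (by rw [hsr]; ring)
end

section
/- Every integer solution of x⁵ + x*y² + y³ = 0 is either (0,0) or of the form (x, y) = (-w - w³, w*(1 + w²)²) for some integer w, and conversely every such pair is a solution. -/
/-! Putting `t = y / x`, the equation becomes `x² = -t²(1 + t)`, so `s = x / t = x² / y` satisfies
`s² = -(1 + t)`; hence `t = -1 - s²`, `x = s t = -s - s³` and `y = t x = s (1 + s²)²`.
The rational number `s` is then a root of the monic integer polynomial `X³ + X + x`, so it is
an integer. -/

open Polynomial

theorem Rat.exists_int_eq_of_cube_add_self_add_int_eq_zero {s : ℚ} {c : ℤ}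
    (h : s ^ 3 + s + c = 0) : ∃ w : ℤ, (w : ℚ) = s := by
  have hmonic : (X ^ 3 + X + C c : ℤ[X]).Monic := by monicity!
  have hroot : aeval s (X ^ 3 + X + C c : ℤ[X]) = 0 := by simpa using h
  obtain ⟨w, hw, -⟩ := exists_integer_of_is_root_of_monic hmonic hroot
  exact ⟨w, by simpa using hw.symm⟩

theorem eq_of_pow_five_add_mul_sq_add_pow_three_eq_zero {K : Type*} [Field K] {x y : K}
    (hy : y ≠ 0) (h : x ^ 5 + x * y ^ 2 + y ^ 3 = 0) :
    x = -(x ^ 2 / y) - (x ^ 2 / y) ^ 3 ∧ y = x ^ 2 / y * (1 + (x ^ 2 / y) ^ 2) ^ 2 := by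
  constructor
  · field_simp
    linear_combination x * h
  · field_simp
    linear_combination (-(x * (x ^ 4 + y ^ 2) - y ^ 3)) * h

theorem stmt_11 (x y : ℤ) :
    x ^ 5 + x * y ^ 2 + y ^ 3 = 0 ↔
      (x = 0 ∧ y = 0) ∨
      ∃ w : ℤ, x = -w - w ^ 3 ∧ y = w * (1 + w ^ 2) ^ 2 := by
  refine ⟨fun h => ?_, ?_⟩
  · rcases eq_or_ne y 0 with rfl | hy
    · left
      simpa using h
    right
    have hq : (x : ℚ) ^ 5 + x * y ^ 2 + y ^ 3 = 0 := by exact_mod_cast h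
    obtain ⟨hx, hy'⟩ := eq_of_pow_five_add_mul_sq_add_pow_three_eq_zero (by exact_mod_cast hy) hq
    obtain ⟨w, hw⟩ := Rat.exists_int_eq_of_cube_add_self_add_int_eq_zero
      (s := (x : ℚ) ^ 2 / y) (c := x) (by linear_combination hx)
    rw [← hw] at hx hy'
    exact ⟨w, by exact_mod_cast hx, by exact_mod_cast hy'⟩
  · rintro (⟨rfl, rfl⟩ | ⟨w, rfl, rfl⟩) <;> ring
end

section
/- Every integer solution of x⁵ + x²*y + y² = 0 is either (0,0) or of the form (x, y) = (-w - w², w³*(1+w)²) for some integer w, and conversely every such pair is a solution. -/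
theorem stmt_12 (x y : ℤ) :
    x ^ 5 + x ^ 2 * y + y ^ 2 = 0 ↔
      (x = 0 ∧ y = 0) ∨
      ∃ w : ℤ, x = -w - w ^ 2 ∧ y = w ^ 3 * (1 + w) ^ 2 := by
  constructor
  · intro h
    by_cases hx : x = 0
    · left
      refine ⟨hx, ?_⟩
      subst hx
      nlinarith [sq_nonneg y]
    · right
      have h1 : (2 * y + x ^ 2) ^ 2 = (x ^ 2) ^ 2 * (1 - 4 * x) := by nlinarith [h]
      have hdvd : x ^ 2 ∣ 2 * y + x ^ 2 := by
        have h2 : (x ^ 2) ^ 2 ∣ (2 * y + x ^ 2) ^ 2 := ⟨1 - 4 * x, h1⟩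
        exact (Int.pow_dvd_pow_iff two_ne_zero).mp h2
      obtain ⟨t, ht⟩ := hdvd
      have hx2 : (x ^ 2) ^ 2 ≠ 0 := pow_ne_zero _ (pow_ne_zero _ hx)
      have ht2 : t ^ 2 = 1 - 4 * x := by
        have : (x ^ 2) ^ 2 * (t ^ 2) = (x ^ 2) ^ 2 * (1 - 4 * x) := by
          rw [← h1, ht]; ring
        exact mul_left_cancel₀ hx2 this
      rcases Int.even_or_odd t with ⟨k, hk⟩ | ⟨w, hw⟩
      · exfalso
        have hm : 4 * k ^ 2 = 1 - 4 * x := by rw [← ht2, hk]; ring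
        omega
      · refine ⟨w, ?_, ?_⟩
        · have : (2 * w + 1) ^ 2 = 1 - 4 * x := by rw [← ht2, hw]
          nlinarith [this]
        · have hxw : x = -w - w ^ 2 := by
            have : (2 * w + 1) ^ 2 = 1 - 4 * x := by rw [← ht2, hw]
            nlinarith [this]
          have hy : 2 * y = 2 * (x ^ 2 * w) := by
            have : 2 * y + x ^ 2 = x ^ 2 * (2 * w + 1) := by rw [ht, hw]
            linarith [this]
          have : y = x ^ 2 * w := by linarith
          rw [this, hxw]; ring
  · rintro (⟨hx, hy⟩ | ⟨w, hx, hy⟩) <;> subst hx <;> subst hy <;> ring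
end

section
/- Every integer solution of x⁵ + x³*y + y³ = 0 is either (0,0) or of the form (x, y) = (w*(1+w)², -w²*(1+w)³) for some integer w, and conversely every such pair is a solution. -/
theorem stmt_13 (x y : ℤ) :
    x ^ 5 + x ^ 3 * y + y ^ 3 = 0 ↔
      (x = 0 ∧ y = 0) ∨
      ∃ w : ℤ, x = w * (1 + w) ^ 2 ∧ y = -w ^ 2 * (1 + w) ^ 3 := by
  constructor
  · intro h
    by_cases hx : x = 0
    · left
      subst hx
      simp at h
      exact ⟨rfl, h⟩
    · right
      have hdvd : x ^ 3 ∣ y ^ 3 := ⟨-(x ^ 2) - y, by linarith [h]⟩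
      have hxy : x ∣ y := (Int.pow_dvd_pow_iff (by norm_num : 3 ≠ 0)).mp hdvd
      obtain ⟨z, hz⟩ := hxy
      have key : x ^ 2 + x * z + z ^ 3 = 0 := by
        have : x ^ 3 * (x ^ 2 + x * z + z ^ 3) = 0 := by
          rw [hz] at h; linarith [h, hz]
        rcases mul_eq_zero.mp this with h' | h'
        · exact absurd (pow_eq_zero_iff (by norm_num) |>.mp h') hx
        · exact h'
      have hzne : z ≠ 0 := by
        intro hz0
        subst hz0
        have hx2 : x ^ 2 = 0 := by linear_combination key
        exact hx (pow_eq_zero_iff (by norm_num : (2:ℕ) ≠ 0) |>.mp hx2)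
      have hsq : (2 * x + z) ^ 2 = z ^ 2 * (1 - 4 * z) := by nlinarith [key]
      have hdvd2 : z ^ 2 ∣ (2 * x + z) ^ 2 := ⟨1 - 4 * z, hsq⟩
      have hzdvd : z ∣ 2 * x + z := (Int.pow_dvd_pow_iff (by norm_num : 2 ≠ 0)).mp hdvd2
      obtain ⟨s, hs⟩ := hzdvd
      have hs2 : s ^ 2 = 1 - 4 * z := by
        have h' : z ^ 2 * s ^ 2 = z ^ 2 * (1 - 4 * z) := by
          rw [← hsq, hs]; ring
        exact mul_left_cancel₀ (pow_ne_zero 2 hzne) h'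
      have hodd : Odd s := by
        have h2 : Odd (s ^ 2) := ⟨-2 * z, by linarith [hs2]⟩
        rcases Int.odd_pow.mp h2 with h' | h'
        · exact h'
        · norm_num at h'
      obtain ⟨w, hw⟩ := hodd
      have hzw : z = -w - w ^ 2 := by nlinarith [hs2, hw]
      have hxw : x = z * w := by
        have h2 : 2 * x = 2 * (z * w) := by linear_combination hs + z * hw
        linarith
      refine ⟨-(1 + w), ?_, ?_⟩
      · rw [hxw, hzw]; ring
      · rw [hz, hxw, hzw]; ring
  · rintro (⟨hx, hy⟩ | ⟨w, hx, hy⟩)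
    · subst hx; subst hy; ring
    · subst hx; subst hy; ring
end

section
/- All integer solutions of the equation x + x²*y - y*z² = 0 are exactly: (x, y, z) = (0, 0, w), (0, w, 0), (-1, 1, 0), and (1, -1, 0), where w is an arbitrary integer. -/
/-!
Rewrite the equation as `x = y * (z² - x²)`. If `x ≠ 0`, then `z² - x²` is a nonzero divisor of `x`,
so `|z² - x²| ≤ |x|`; but `|z² - x²| = ||z| - |x|| * (|z| + |x|) ≥ |z| + |x|`, forcing `z = 0`.
The equation then reads `x * (1 + x * y) = 0`, so `x * (-y) = 1` and `x = ±1`, `y = -x`.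
-/

theorem Int.abs_add_abs_le_abs_sq_sub_sq {a b : ℤ} (h : a ^ 2 ≠ b ^ 2) :
    |a| + |b| ≤ |a ^ 2 - b ^ 2| := by
  have hab : |a| - |b| ≠ 0 := fun e => h (by rw [← sq_abs a, sub_eq_zero.mp e, sq_abs])
  calc |a| + |b| = 1 * (|a| + |b|) := (one_mul _).symm
    _ ≤ |(|a| - |b|)| * (|a| + |b|) := by gcongr; exact Int.one_le_abs hab
    _ = |a ^ 2 - b ^ 2| := by
      rw [← sq_abs a, ← sq_abs b, sq_sub_sq, abs_mul, abs_of_nonneg (by positivity : 0 ≤ |a| + |b|),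
        mul_comm]

theorem Int.eq_zero_of_eq_mul_sq_sub_sq {x y z : ℤ} (hx : x ≠ 0) (h : x = y * (z ^ 2 - x ^ 2)) :
    z = 0 := by
  have hd : z ^ 2 ≠ x ^ 2 := fun hd => hx (by rw [h, hd, sub_self, mul_zero])
  have hdvd : |z ^ 2 - x ^ 2| ≤ |x| := by
    simpa only [Int.abs_eq_natAbs, Nat.cast_le] using
      Int.natAbs_le_of_dvd_ne_zero (Dvd.intro_left y h.symm) hx
  have hlow := Int.abs_add_abs_le_abs_sq_sub_sq hd
  exact abs_nonpos_iff.mp (by linarith)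

theorem stmt_14 (x y z : ℤ) :
    x + x ^ 2 * y - y * z ^ 2 = 0 ↔
      (∃ w : ℤ, x = 0 ∧ y = 0 ∧ z = w) ∨
      (∃ w : ℤ, x = 0 ∧ y = w ∧ z = 0) ∨
      (x = -1 ∧ y = 1 ∧ z = 0) ∨
      (x = 1 ∧ y = -1 ∧ z = 0) := by
  refine ⟨fun h => ?_, ?_⟩
  · rcases eq_or_ne x 0 with rfl | hx
    · have hyz : y * z ^ 2 = 0 := by linear_combination -h
      rcases mul_eq_zero.mp hyz with hy | hz
      · exact Or.inl ⟨z, rfl, hy, rfl⟩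
      · exact Or.inr (Or.inl ⟨y, rfl, rfl, pow_eq_zero_iff two_ne_zero |>.mp hz⟩)
    · have hz : z = 0 := Int.eq_zero_of_eq_mul_sq_sub_sq (y := y) hx (by linear_combination h)
      subst hz
      have hxy : x * -y = 1 := mul_left_cancel₀ hx (by linear_combination -h)
      rcases Int.eq_one_or_neg_one_of_mul_eq_one' hxy with ⟨rfl, hy⟩ | ⟨rfl, hy⟩
      · exact Or.inr (Or.inr (Or.inr ⟨rfl, by linarith, rfl⟩))
      · exact Or.inr (Or.inr (Or.inl ⟨rfl, by linarith, rfl⟩))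
  · rintro (⟨w, rfl, rfl, rfl⟩ | ⟨w, rfl, rfl, rfl⟩ | ⟨rfl, rfl, rfl⟩ | ⟨rfl, rfl, rfl⟩) <;> ring
end
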